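/- Suppose f : ℂ → ℂ is continuous, t > 0, C > 0, K > 1, and for every point p ∈ ℂ with |p| > 1 one has |f(p)|² ≤ C ∫_{|z| ≤ K|p|} |f(z)|² dA(z). If additionally t > K²/2 and ∫_ℂ |f(z)|² e^{-|z|²} dA(z) < ∞, then limsup_{r→∞} (sup_{|z|=r} |f(z)|) / e^{t r²} = 0. -/
import Mathlib


open Complex MeasureTheory Metric Real Filter

/-- If `f : ℂ → ℂ` is continuous, satisfies the pointwise estimate
`|f p|² ≤ C ∫_{|z| ≤ K|p|} |f|² dA` for `|p| > 1`, and
`∫ |f|² e^{-|z|²} dA < ∞`, then for `t > K²/2` the maximum modulus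
`M_r = sup_{|z| = r} |f(z)|` satisfies `limsup_{r→∞} M_r / e^{t r²} = 0`. -/
theorem growth_bound_from_point_evaluation
    (f : ℂ → ℂ) (hf : Continuous f)
    (t C K : ℝ) (ht0 : 0 < t) (hC : 0 < C) (hK : 1 < K)
    (hpe : ∀ p : ℂ, 1 < ‖p‖ →
      ‖f p‖ ^ 2 ≤ C * ∫ z in closedBall (0:ℂ) (K * ‖p‖), ‖f z‖ ^ 2)
    (htK : K ^ 2 / 2 < t)
    (hint : Integrable (fun z : ℂ => ‖f z‖ ^ 2 * Real.exp (-‖z‖ ^ 2))) :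
    limsup (fun r : ℝ =>
      (sSup ((fun z : ℂ => ‖f z‖) '' sphere (0:ℂ) r)) / Real.exp (t * r ^ 2)) atTop
      = 0 := by
  set I : ℝ := ∫ z : ℂ, ‖f z‖ ^ 2 * Real.exp (-‖z‖ ^ 2) with hIdef
  have hI0 : 0 ≤ I := integral_nonneg fun z => by positivity
  set B : ℝ → ℝ := fun r => Real.sqrt (C * I) * Real.exp (K ^ 2 / 2 * r ^ 2) with hBdef
  have hB0 : ∀ r, 0 ≤ B r := fun r => by positivity
  have hBsq : ∀ r, B r ^ 2 = C * (Real.exp (K ^ 2 * r ^ 2) * I) := by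
    intro r
    have : Real.sqrt (C * I) ^ 2 = C * I := Real.sq_sqrt (by positivity)
    rw [hBdef]
    rw [mul_pow, this, pow_two, ← Real.exp_add,
      show K ^ 2 / 2 * r ^ 2 + K ^ 2 / 2 * r ^ 2 = K ^ 2 * r ^ 2 by ring]
    ring
  -- pointwise bound
  have key : ∀ r : ℝ, 1 < r → ∀ p : ℂ, ‖p‖ = r → ‖f p‖ ≤ B r := by
    intro r hr p hp
    have h1 : ‖f p‖ ^ 2 ≤ C * ∫ z in closedBall (0:ℂ) (K * r), ‖f z‖ ^ 2 := by
      have := hpe p (by rw [hp]; exact hr)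
      rwa [hp] at this
    have h2 : (∫ z in closedBall (0:ℂ) (K * r), ‖f z‖ ^ 2)
        ≤ Real.exp (K ^ 2 * r ^ 2) * I := by
      have hint1 : IntegrableOn (fun z : ℂ => ‖f z‖ ^ 2) (closedBall (0:ℂ) (K * r)) := by
        exact (hf.norm.pow 2).continuousOn.integrableOn_compact (isCompact_closedBall _ _)
      have hint2 : IntegrableOn
          (fun z : ℂ => Real.exp (K ^ 2 * r ^ 2) * (‖f z‖ ^ 2 * Real.exp (-‖z‖ ^ 2)))
          (closedBall (0:ℂ) (K * r)) := (hint.const_mul _).integrableOn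
      have step1 : (∫ z in closedBall (0:ℂ) (K * r), ‖f z‖ ^ 2)
          ≤ ∫ z in closedBall (0:ℂ) (K * r),
              Real.exp (K ^ 2 * r ^ 2) * (‖f z‖ ^ 2 * Real.exp (-‖z‖ ^ 2)) := by
        apply setIntegral_mono_on hint1 hint2 (measurableSet_closedBall)
        intro z hz
        have hz' : ‖z‖ ≤ K * r := by
          simpa [Complex.dist_eq] using mem_closedBall.mp hz
        have hz2 : ‖z‖ ^ 2 ≤ K ^ 2 * r ^ 2 := by nlinarith [norm_nonneg z]
        have he : (1:ℝ) ≤ Real.exp (K ^ 2 * r ^ 2) * Real.exp (-‖z‖ ^ 2) := by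
          rw [← Real.exp_add]
          apply Real.one_le_exp
          linarith
        nlinarith [sq_nonneg ‖f z‖]
      have step2 : (∫ z in closedBall (0:ℂ) (K * r), ‖f z‖ ^ 2 * Real.exp (-‖z‖ ^ 2)) ≤ I := by
        apply setIntegral_le_integral hint
        filter_upwards with z using by positivity
      calc (∫ z in closedBall (0:ℂ) (K * r), ‖f z‖ ^ 2)
          ≤ ∫ z in closedBall (0:ℂ) (K * r),
              Real.exp (K ^ 2 * r ^ 2) * (‖f z‖ ^ 2 * Real.exp (-‖z‖ ^ 2)) := step1
        _ = Real.exp (K ^ 2 * r ^ 2) *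
              ∫ z in closedBall (0:ℂ) (K * r), ‖f z‖ ^ 2 * Real.exp (-‖z‖ ^ 2) := by
              rw [integral_const_mul]
        _ ≤ Real.exp (K ^ 2 * r ^ 2) * I := by
              exact mul_le_mul_of_nonneg_left step2 (Real.exp_pos _).le
    have hsq : ‖f p‖ ^ 2 ≤ B r ^ 2 := by
      rw [hBsq r]
      calc ‖f p‖ ^ 2 ≤ C * ∫ z in closedBall (0:ℂ) (K * r), ‖f z‖ ^ 2 := h1
        _ ≤ C * (Real.exp (K ^ 2 * r ^ 2) * I) := by
            exact mul_le_mul_of_nonneg_left h2 hC.le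
    nlinarith [norm_nonneg (f p), hB0 r]
  -- sup bound
  have hM : ∀ r : ℝ, 1 < r →
      sSup ((fun z : ℂ => ‖f z‖) '' sphere (0:ℂ) r) ≤ B r := by
    intro r hr
    apply Real.sSup_le _ (hB0 r)
    rintro x ⟨p, hp, rfl⟩
    exact key r hr p (by simpa [Complex.dist_eq] using mem_sphere.mp hp)
  -- squeeze
  have hg0 : ∀ᶠ r : ℝ in atTop, 0 ≤
      (sSup ((fun z : ℂ => ‖f z‖) '' sphere (0:ℂ) r)) / Real.exp (t * r ^ 2) := by
    filter_upwards with r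
    apply div_nonneg _ (Real.exp_pos _).le
    exact Real.sSup_nonneg (by rintro x ⟨p, hp, rfl⟩; exact norm_nonneg _)
  have hgle : ∀ᶠ r : ℝ in atTop,
      (sSup ((fun z : ℂ => ‖f z‖) '' sphere (0:ℂ) r)) / Real.exp (t * r ^ 2)
        ≤ Real.sqrt (C * I) * Real.exp ((K ^ 2 / 2 - t) * r ^ 2) := by
    filter_upwards [eventually_gt_atTop 1] with r hr
    have : (sSup ((fun z : ℂ => ‖f z‖) '' sphere (0:ℂ) r)) / Real.exp (t * r ^ 2)
        ≤ B r / Real.exp (t * r ^ 2) :=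
      (div_le_div_iff_of_pos_right (Real.exp_pos _)).mpr (hM r hr)
    refine this.trans (le_of_eq ?_)
    rw [hBdef]
    rw [mul_div_assoc, ← Real.exp_sub]
    ring_nf
  have htend : Tendsto (fun r : ℝ => Real.sqrt (C * I) * Real.exp ((K ^ 2 / 2 - t) * r ^ 2))
      atTop (nhds 0) := by
    rw [show (0:ℝ) = Real.sqrt (C * I) * 0 by ring]
    apply Tendsto.const_mul
    apply Real.tendsto_exp_atBot.comp
    have h2 : Tendsto (fun r : ℝ => r ^ 2) atTop atTop := tendsto_pow_atTop two_ne_zero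
    have hneg : K ^ 2 / 2 - t < 0 := by linarith
    exact h2.const_mul_atTop_of_neg hneg
  exact (squeeze_zero' hg0 hgle htend).limsup_eq
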